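/- Let Q be a quiver, u a representation with dimension vector α and v a representation with dimension vector β. With T the map φ ↦ (v(a)∘φ(ia) − φ(ta)∘u(a))_a from ⊕_s Hom(V(s),W(s)) to ⊕_a Hom(V(ia),W(ta)), we have dim Hom(u,v) − dim coker(T) = ⟨α,β⟩, where ⟨·,·⟩ is the Ringel form. (The cokernel of T is Ext(u,v).) -/
import Mathlib


open Finset Module

/-- The Ringel form of a quiver. -/
def ringel {V A : Type} [Fintype V] [Fintype A] (src tgt : A → V) (α β : V → ℤ) : ℤ :=
  ∑ s : V, α s * β s - ∑ a : A, α (src a) * β (tgt a)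

/-- The map `T(φ) = (v(a)∘φ(ia) − φ(ta)∘u(a))_{a∈Q1}`. -/
def Tmap (k : Type) [Field k] {Q0 Q1 : Type} (src tgt : Q1 → Q0)
    (V W : Q0 → Type)
    [∀ s, AddCommGroup (V s)] [∀ s, Module k (V s)]
    [∀ s, AddCommGroup (W s)] [∀ s, Module k (W s)]
    (u : ∀ a, V (src a) →ₗ[k] V (tgt a)) (v : ∀ a, W (src a) →ₗ[k] W (tgt a)) :
    (∀ s, V s →ₗ[k] W s) →ₗ[k] (∀ a, V (src a) →ₗ[k] W (tgt a)) where
  toFun φ := fun a => v a ∘ₗ φ (src a) - φ (tgt a) ∘ₗ u a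
  map_add' φ ψ := by
    funext a
    simp only [Pi.add_apply, LinearMap.comp_add, LinearMap.add_comp]
    abel
  map_smul' c φ := by
    funext a
    simp only [Pi.smul_apply, LinearMap.comp_smul, LinearMap.smul_comp, RingHom.id_apply,
      smul_sub]

/-- `dim Hom(u,v) − dim Ext(u,v) = ⟨α,β⟩`: the dimension of the kernel of `T` minus the
dimension of its cokernel equals the Ringel form of the dimension vectors. -/
theorem dim_hom_sub_dim_ext_eq_ringel (k : Type) [Field k] {Q0 Q1 : Type}
    [Fintype Q0] [Fintype Q1] (src tgt : Q1 → Q0) (α β : Q0 → ℕ)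
    (V W : Q0 → Type)
    [∀ s, AddCommGroup (V s)] [∀ s, Module k (V s)] [∀ s, FiniteDimensional k (V s)]
    [∀ s, AddCommGroup (W s)] [∀ s, Module k (W s)] [∀ s, FiniteDimensional k (W s)]
    (hV : ∀ s, finrank k (V s) = α s) (hW : ∀ s, finrank k (W s) = β s)
    (u : ∀ a, V (src a) →ₗ[k] V (tgt a)) (v : ∀ a, W (src a) →ₗ[k] W (tgt a)) :
    (finrank k (LinearMap.ker (Tmap k src tgt V W u v)) : ℤ)
      - (finrank k ((∀ a, V (src a) →ₗ[k] W (tgt a)) ⧸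
          LinearMap.range (Tmap k src tgt V W u v)) : ℤ)
      = ringel src tgt (fun s => (α s : ℤ)) (fun s => (β s : ℤ)) := by
  set T := Tmap k src tgt V W u v with hT
  have h1 : finrank k (LinearMap.range T) + finrank k (LinearMap.ker T)
      = finrank k (∀ s, V s →ₗ[k] W s) := LinearMap.finrank_range_add_finrank_ker T
  have h2 : finrank k ((∀ a, V (src a) →ₗ[k] W (tgt a)) ⧸ LinearMap.range T)
        + finrank k (LinearMap.range T)
      = finrank k (∀ a, V (src a) →ₗ[k] W (tgt a)) :=
    Submodule.finrank_quotient_add_finrank _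
  have hdom : finrank k (∀ s, V s →ₗ[k] W s) = ∑ s : Q0, α s * β s := by
    rw [Module.finrank_pi_fintype]
    exact Finset.sum_congr rfl fun s _ => by
      rw [Module.finrank_linearMap, hV, hW]
  have hcod : finrank k (∀ a, V (src a) →ₗ[k] W (tgt a))
      = ∑ a : Q1, α (src a) * β (tgt a) := by
    rw [Module.finrank_pi_fintype]
    exact Finset.sum_congr rfl fun a _ => by
      rw [Module.finrank_linearMap, hV, hW]
  rw [hdom] at h1
  rw [hcod] at h2
  unfold ringel
  have e1 : (∑ x : Q0, (α x : ℤ) * (β x : ℤ)) = ((∑ s : Q0, α s * β s : ℕ) : ℤ) := by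
    push_cast; rfl
  have e2 : (∑ x : Q1, (α (src x) : ℤ) * (β (tgt x) : ℤ))
      = ((∑ a : Q1, α (src a) * β (tgt a) : ℕ) : ℤ) := by
    push_cast; rfl
  rw [e1, e2]
  omega
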